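/- Let X be a finite set with d linear orders ≤₁, …, ≤_d, let s : X → {±1}, and let R be the set of sign functions r : [d] → {±1} with r(1) = 1. For r ∈ R and x ∈ X, define ι_r(x) as the length of the longest s-alternating sequence ending at x which is increasing in ≤_i for each i with r(i)=+1 and decreasing in ≤_i for each i with r(i)=-1. Then for all x, y ∈ X with s(x) ≠ s(y), the vectors (ι_r(x))_{r ∈ R} and (ι_r(y))_{r ∈ R} in N^R are distinct. -/

import Mathlib

/-- The length (number of elements) of the longest `s`-alternating sequence ending
at `x` which is increasing in `lt t` when `r t = 1` and decreasing in `lt t`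
when `r t = -1`. -/
noncomputable def altChainLenMulti {X : Type*} {d : ℕ} (lt : Fin d → X → X → Prop)
    (r : Fin d → ℤˣ) (s : X → ℤˣ) (x : X) : ℕ :=
  sSup {k : ℕ | ∃ g : Fin k → X, (∃ hk : 0 < k, g ⟨k - 1, by omega⟩ = x) ∧
    ∀ i j : Fin k, (i : ℕ) + 1 = (j : ℕ) →
      s (g j) = -s (g i) ∧
      ∀ t : Fin d, if r t = 1 then lt t (g i) (g j) else lt t (g j) (g i)}

/-! Let `x <₀ y` in the first order have different colours, and let `r` record, for each
order, whether `x` lies below `y`; then `r 0 = 1`. Every admissible chain ending at `x` extends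
by `y`, so `ι_r(x) < ι_r(y)`. The lengths are finite because an admissible chain is strictly
monotone in each order (reversed where `r t = -1`), hence injective. -/

theorem Fin.rel_of_forall_rel_succ_of_lt {α : Type*} (R : α → α → Prop) [IsTrans α R]
    {k : ℕ} {g : Fin k → α} (h : ∀ i j : Fin k, (i : ℕ) + 1 = j → R (g i) (g j))
    {i j : Fin k} (hij : i < j) : R (g i) (g j) := by
  obtain ⟨i, hi⟩ := i
  obtain ⟨j, hj⟩ := j
  change i + 1 ≤ j at hij
  revert hj
  induction j, hij using Nat.le_induction with
  | base => exact fun _ ↦ h _ _ rfl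
  | succ j hij ih => exact fun hj ↦ _root_.trans (ih (by omega)) (h ⟨j, by omega⟩ _ rfl)

theorem Fin.injective_of_forall_rel_succ {α : Type*} (R : α → α → Prop) [IsStrictOrder α R]
    {k : ℕ} {g : Fin k → α} (h : ∀ i j : Fin k, (i : ℕ) + 1 = j → R (g i) (g j)) :
    Function.Injective g := by
  intro i j hg
  by_contra hij
  rcases lt_or_gt_of_ne hij with hij | hij
  · exact ne_of_irrefl (rel_of_forall_rel_succ_of_lt R h hij) hg
  · exact ne_of_irrefl' (rel_of_forall_rel_succ_of_lt R h hij) hg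

section AltChain

variable {X : Type*} {d : ℕ} (lt : Fin d → X → X → Prop) (r : Fin d → ℤˣ) (s : X → ℤˣ)

def AltStep (a b : X) : Prop :=
  s b = -s a ∧ ∀ t : Fin d, if r t = 1 then lt t a b else lt t b a

def altChainLengths (x : X) : Set ℕ :=
  {k | ∃ g : Fin k → X, (∃ hk : 0 < k, g ⟨k - 1, by omega⟩ = x) ∧
    ∀ i j : Fin k, (i : ℕ) + 1 = j → AltStep lt r s (g i) (g j)}

theorem altChainLenMulti_eq_sSup (x : X) :
    altChainLenMulti lt r s x = sSup (altChainLengths lt r s x) :=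
  rfl

theorem one_mem_altChainLengths (x : X) : 1 ∈ altChainLengths lt r s x :=
  ⟨fun _ ↦ x, ⟨one_pos, rfl⟩, fun i j hij ↦ by omega⟩

theorem bddAbove_altChainLengths [Finite X] (t : Fin d) (ht : IsStrictOrder X (lt t))
    (x : X) : BddAbove (altChainLengths lt r s x) := by
  refine ⟨Nat.card X, ?_⟩
  rintro k ⟨g, -, hg⟩
  let R : X → X → Prop := if r t = 1 then lt t else Function.swap (lt t)
  have hR : IsStrictOrder X R := by unfold R; split_ifs <;> infer_instance
  have hstep : ∀ i j : Fin k, (i : ℕ) + 1 = j → R (g i) (g j) := by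
    intro i j hij
    have := (hg i j hij).2 t
    unfold R
    split_ifs at this ⊢ <;> exact this
  simpa using Nat.card_le_card_of_injective g (Fin.injective_of_forall_rel_succ R hstep)

theorem succ_mem_altChainLengths {x y : X} {k : ℕ} (hmem : k ∈ altChainLengths lt r s x)
    (hxy : AltStep lt r s x y) : k + 1 ∈ altChainLengths lt r s y := by
  obtain ⟨g, ⟨hk, hgx⟩, hg⟩ := hmem
  refine ⟨Fin.snoc g y, ⟨k.succ_pos, Fin.snoc_last _ _⟩, fun i j hij ↦ ?_⟩
  obtain ⟨i, rfl⟩ : ∃ i' : Fin k, i = i'.castSucc := ⟨⟨i, by omega⟩, rfl⟩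
  induction j using Fin.lastCases with
  | last =>
    have hi : i = ⟨k - 1, Nat.sub_one_lt_of_lt hk⟩ := Fin.ext (by simp at hij ⊢; omega)
    rwa [hi, Fin.snoc_castSucc, Fin.snoc_last, hgx]
  | cast j => simpa using hg _ j hij

theorem altChainLenMulti_lt_of_altStep {x y : X} (hx : BddAbove (altChainLengths lt r s x))
    (hy : BddAbove (altChainLengths lt r s y)) (hxy : AltStep lt r s x y) :
    altChainLenMulti lt r s x < altChainLenMulti lt r s y := by
  rw [altChainLenMulti_eq_sSup, altChainLenMulti_eq_sSup, Nat.lt_iff_add_one_le]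
  apply le_csSup hy
  exact succ_mem_altChainLengths lt r s (Nat.sSup_mem ⟨1, one_mem_altChainLengths lt r s x⟩ hx) hxy

open Classical in
noncomputable def signsBetween (x y : X) (t : Fin d) : ℤˣ :=
  if lt t x y then 1 else -1

theorem altStep_signsBetween (htri : ∀ t, Std.Trichotomous (lt t)) {x y : X} (hxy : x ≠ y)
    (hs : s x ≠ s y) : AltStep lt (signsBetween lt x y) s x y := by
  refine ⟨Int.units_ne_iff_eq_neg.mp hs.symm, fun t ↦ ?_⟩
  by_cases h : lt t x y
  · simp [signsBetween, h]
  · simpa [signsBetween, h, hxy] using @trichotomous_of _ (lt t) (htri t) x y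

end AltChain

/-- For `d` linear orders on a finite set `X` and a coloring `s : X → {±1}`,
points of different colors have distinct vectors `(ι_r)_{r ∈ R}`, where `R` is
the set of sign functions `r : [d] → {±1}` with `r 1 = 1`. -/
theorem iota_vector_injective_on_colors {X : Type*} [Fintype X] {d : ℕ} (hd : 0 < d)
    (lt : Fin d → X → X → Prop)
    (hlt : ∀ t, IsStrictTotalOrder X (lt t))
    (s : X → ℤˣ) :
    ∀ x y : X, s x ≠ s y →
      (fun r : {r : Fin d → ℤˣ // r ⟨0, hd⟩ = 1} => altChainLenMulti lt r.val s x) ≠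
      (fun r : {r : Fin d → ℤˣ // r ⟨0, hd⟩ = 1} => altChainLenMulti lt r.val s y) := by
  intro x y hs hιxy
  have hxy : x ≠ y := ne_of_apply_ne s hs
  wlog h : lt ⟨0, hd⟩ x y generalizing x y with H
  · have := @trichotomous_of _ (lt ⟨0, hd⟩) (hlt _).toTrichotomous x y
    exact H y x hs.symm hιxy.symm hxy.symm (by tauto)
  let r : {r : Fin d → ℤˣ // r ⟨0, hd⟩ = 1} := ⟨signsBetween lt x y, by simp [signsBetween, h]⟩
  have hbdd (z : X) := bddAbove_altChainLengths lt r.val s ⟨0, hd⟩ (hlt _).toIsStrictOrder z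
  have hstep := altStep_signsBetween lt s (fun t ↦ (hlt t).toTrichotomous) hxy hs
  exact (altChainLenMulti_lt_of_altStep lt r.val s (hbdd x) (hbdd y) hstep).ne (congrFun hιxy r)
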